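/- Let R be a commutative reduced ring such that the annihilating-ideal graph AG(R) is bipartite (2-colorable with at least one edge). Then R has exactly two minimal prime ideals; more precisely, there exist two distinct prime ideals P1, P2 of R with P1 ∩ P2 = (0). -/

import Mathlib

/-!
If a nonzero ideal `K` has nonzero annihilator `A` and `ab ∈ A` with `a, b ∉ A`, then `A`, `aK`
and `bK` are three pairwise annihilating nonzero ideals, pairwise distinct because in a reduced
ring no nonzero ideal squares to zero: a triangle in `AG(R)`. So when `AG(R)` is bipartite, the
annihilator of every vertex is prime. For a vertex `J`, both `P = Ann(J)` and `Ann(P)` are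
vertices, hence prime, and `P ∩ Ann(P) = 0` because its elements square to zero.
-/

/-- The annihilating-ideal graph of a commutative ring `R`. -/
def annihilatingIdealGraph (R : Type*) [CommRing R] :
    SimpleGraph {I : Ideal R // I ≠ ⊥ ∧ Submodule.annihilator I ≠ ⊥} where
  Adj I J := I ≠ J ∧ (I : Ideal R) * (J : Ideal R) = ⊥
  symm := ⟨fun I J h => ⟨h.1.symm, by rw [mul_comm]; exact h.2⟩⟩
  loopless := ⟨fun I h => h.1 rfl⟩

namespace Ideal

variable {R : Type*} [CommRing R]

theorem inf_annihilator_eq_bot [IsReduced R] (I : Ideal R) : I ⊓ Submodule.annihilator I = ⊥ := by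
  rw [← pow_eq_bot two_ne_zero, eq_bot_iff, ← Submodule.annihilator_mul I, sq]
  exact mul_mono inf_le_right inf_le_left

theorem annihilator_ne_bot_of_mul_eq_bot {I J : Ideal R} (hI : I ≠ ⊥) (h : I * J = ⊥) :
    Submodule.annihilator J ≠ ⊥ :=
  fun hJ => hI <| eq_bot_iff.mpr <| hJ ▸ Submodule.le_annihilator_iff.mpr (by rwa [smul_eq_mul])

theorem span_singleton_mul_ne_bot {a : R} {K : Ideal R} (ha : a ∉ Submodule.annihilator K) :
    span {a} * K ≠ ⊥ :=
  fun h => ha <| span_singleton_le_iff_mem _ |>.mp <|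
    Submodule.le_annihilator_iff.mpr (by rwa [smul_eq_mul])

end Ideal

section AnnihilatingIdealGraph

variable {R : Type*} [CommRing R] [IsReduced R]

theorem annihilatingIdealGraph_adj_of_mul_eq_bot {I J : Ideal R} (hI : I ≠ ⊥) (hJ : J ≠ ⊥)
    (h : I * J = ⊥) :
    (annihilatingIdealGraph R).Adj
      ⟨I, hI, Ideal.annihilator_ne_bot_of_mul_eq_bot hJ (mul_comm I J ▸ h)⟩
      ⟨J, hJ, Ideal.annihilator_ne_bot_of_mul_eq_bot hI h⟩ := by
  refine ⟨fun hIJ => hI ?_, h⟩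
  rw [Subtype.mk.injEq] at hIJ
  rwa [← hIJ, ← sq, Ideal.pow_eq_bot two_ne_zero] at h

theorem not_cliqueFree_three_annihilatingIdealGraph {I J K : Ideal R} (hI : I ≠ ⊥) (hJ : J ≠ ⊥)
    (hK : K ≠ ⊥) (hIJ : I * J = ⊥) (hIK : I * K = ⊥) (hJK : J * K = ⊥) :
    ¬ (annihilatingIdealGraph R).CliqueFree 3 := by
  classical
  exact fun hfree => hfree _ <| SimpleGraph.is3Clique_triple_iff.mpr
    ⟨annihilatingIdealGraph_adj_of_mul_eq_bot hI hJ hIJ,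
      annihilatingIdealGraph_adj_of_mul_eq_bot hI hK hIK,
      annihilatingIdealGraph_adj_of_mul_eq_bot hJ hK hJK⟩

theorem isPrime_annihilator_of_cliqueFree_three (hfree : (annihilatingIdealGraph R).CliqueFree 3)
    {K : Ideal R} (hK : K ≠ ⊥) (hA : Submodule.annihilator K ≠ ⊥) :
    (Submodule.annihilator K).IsPrime := by
  refine ⟨mt Submodule.annihilator_eq_top_iff.mp hK, fun {a b} hab => ?_⟩
  by_contra! hnot
  obtain ⟨ha, hb⟩ := hnot
  have hAa : Submodule.annihilator K * (Ideal.span {a} * K) = ⊥ := by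
    rw [mul_left_comm, Submodule.annihilator_mul, Ideal.mul_bot]
  have hAb : Submodule.annihilator K * (Ideal.span {b} * K) = ⊥ := by
    rw [mul_left_comm, Submodule.annihilator_mul, Ideal.mul_bot]
  have hab' : Ideal.span {a} * K * (Ideal.span {b} * K) = ⊥ := by
    have hspan : Ideal.span {a * b} * K = ⊥ := by
      rw [← smul_eq_mul, ← Submodule.le_annihilator_iff, Ideal.span_singleton_le_iff_mem]
      exact hab
    rw [mul_mul_mul_comm, Ideal.span_singleton_mul_span_singleton, ← mul_assoc, hspan,
      Ideal.bot_mul]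
  exact not_cliqueFree_three_annihilatingIdealGraph hA (Ideal.span_singleton_mul_ne_bot ha)
    (Ideal.span_singleton_mul_ne_bot hb) hAa hAb hab' hfree

end AnnihilatingIdealGraph

theorem reduced_bipartite_two_primes {R : Type*} [CommRing R] [IsReduced R]
    (hcol : (annihilatingIdealGraph R).Colorable 2)
    (hedge : ∃ I J, (annihilatingIdealGraph R).Adj I J) :
    ∃ P₁ P₂ : Ideal R, P₁.IsPrime ∧ P₂.IsPrime ∧ P₁ ≠ P₂ ∧ P₁ ⊓ P₂ = ⊥ := by
  obtain ⟨-, ⟨J, hJ, hP⟩, -⟩ := hedge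
  have hfree := hcol.cliqueFree (by norm_num : 2 < 3)
  set P := Submodule.annihilator J
  have hJP : J * P = ⊥ := by rw [mul_comm, Submodule.annihilator_mul]
  have hAnnP := Ideal.annihilator_ne_bot_of_mul_eq_bot hJ hJP
  refine ⟨P, Submodule.annihilator P, isPrime_annihilator_of_cliqueFree_three hfree hJ hP,
    isPrime_annihilator_of_cliqueFree_three hfree hP hAnnP, fun hPP => hP ?_,
    Ideal.inf_annihilator_eq_bot P⟩
  simpa [← hPP] using Ideal.inf_annihilator_eq_bot P
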